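/- arXiv:1412.1540 — 2 statements merged into one kernel-verified Lean document; each statement's English description precedes it below -/
import Mathlib

section
/- Let x(t) be a nontrivial solution of the linear cyclic negative feedback system and suppose x(t₀) ∉ 𝒩. Then for all sufficiently small ε > 0 one has x(t₀ + ε) ∈ 𝒩 and x(t₀ − ε) ∈ 𝒩 with N(x(t₀ + ε)) = N_m(x(t₀)) and N(x(t₀ − ε)) = N_M(x(t₀)). -/
open Filter Topology

/-- δ₁ = −1 (index `0` in our 0-based indexing), δᵢ = 1 for the other indices. -/
def cyclicDelta (n : ℕ) [NeZero n] (i : Fin n) : ℝ := if i = 0 then -1 else 1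

/-- The set Λ of vectors with all coordinates nonzero. -/
def cyclicLambda (n : ℕ) [NeZero n] : Set (Fin n → ℝ) := {x | ∀ i, x i ≠ 0}

/-- The integer valued Lyapunov function `N(x) = card {i : δᵢ xᵢ x_{i−1} < 0}`
(cyclic indices, `x₀ = xₙ`). -/
noncomputable def cyclicN (n : ℕ) [NeZero n] (x : Fin n → ℝ) : ℕ :=
  Nat.card {i : Fin n // cyclicDelta n i * x i * x (i - 1) < 0}

/-- `N_m(x)`: the minimum of `N` over `U ∩ Λ` for all sufficiently small
neighborhoods `U` of `x`, i.e. the least value of `N` attained in every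
neighborhood of `x` within `Λ`. -/
noncomputable def cyclicNm (n : ℕ) [NeZero n] (x : Fin n → ℝ) : ℕ :=
  sInf {k | ∃ᶠ y in 𝓝[cyclicLambda n] x, cyclicN n y = k}

/-- `N_M(x)`: the maximum of `N` over `U ∩ Λ` for all sufficiently small
neighborhoods `U` of `x`. -/
noncomputable def cyclicNM (n : ℕ) [NeZero n] (x : Fin n → ℝ) : ℕ :=
  sSup {k | ∃ᶠ y in 𝓝[cyclicLambda n] x, cyclicN n y = k}

/-- The set 𝒩 on which `N` extends continuously. -/
def cyclicGood (n : ℕ) [NeZero n] : Set (Fin n → ℝ) :=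
  {x | cyclicNm n x = cyclicNM n x}

/-- ñ = n if n is odd, n − 1 if n is even. -/
def ntilde (n : ℕ) : ℕ := if n % 2 = 1 then n else n - 1

/-- A linear cyclic negative feedback system: coefficients `diag t i = a_{ii}(t)`
and `sub t i = a_{i,i−1}(t)` (cyclically, `sub t 0 = a_{1,n}(t)`), all continuous,
with `a_{1,n}(t) < 0` and `a_{i,i−1}(t) > 0` for `i ≠ 1`. -/
structure LinCNF (n : ℕ) [NeZero n] where
  diag : ℝ → Fin n → ℝ
  sub : ℝ → Fin n → ℝ
  cont_diag : ∀ i, Continuous fun t => diag t i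
  cont_sub : ∀ i, Continuous fun t => sub t i
  sub_neg : ∀ t, sub t 0 < 0
  sub_pos : ∀ t (i : Fin n), i ≠ 0 → 0 < sub t i

/-- `x` is a solution of the linear system `ẋᵢ = a_{ii}(t)xᵢ + a_{i,i−1}(t)x_{i−1}`. -/
def LinCNF.IsSolution {n : ℕ} [NeZero n] (S : LinCNF n) (x : ℝ → Fin n → ℝ) : Prop :=
  ∀ (t : ℝ) (i : Fin n),
    HasDerivAt (fun s => x s i) (S.diag t i * x t i + S.sub t i * x t (i - 1)) t

/-- `Φ` is the fundamental (matrix) solution, `Φ(0) = I`. -/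
def LinCNF.IsFundamental {n : ℕ} [NeZero n] (S : LinCNF n)
    (Φ : ℝ → (Fin n → ℝ) →ₗ[ℝ] (Fin n → ℝ)) : Prop :=
  Φ 0 = LinearMap.id ∧ ∀ x₀ : Fin n → ℝ, S.IsSolution fun t => Φ t x₀

/-- The cone `K_h = {0} ∪ {x : N_M(x) ≤ 2h − 1}`. -/
def Kcone (n : ℕ) [NeZero n] (h : ℕ) : Set (Fin n → ℝ) :=
  {0} ∪ {x | cyclicNM n x ≤ 2 * h - 1}

/-- The complementary cone `K^h = {0} ∪ {x : N_m(x) > 2h − 1}`. -/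
def KconeUp (n : ℕ) [NeZero n] (h : ℕ) : Set (Fin n → ℝ) :=
  {0} ∪ {x | 2 * h - 1 < cyclicNm n x}

/-!
Write `z = x(t₀) ≠ 0` (uniqueness for the linear system). Off the zeros of `z` the signs of
`x(t₀ ± ε)` are those of `z`. Across a zero `zᵢ = 0` the equation
`ẋᵢ = aᵢᵢ xᵢ + a_{i,i−1} x_{i−1}` with `δᵢ a_{i,i−1} > 0` forces, through the integrating factor,
`δᵢ xᵢ x_{i−1} > 0` just after `t₀` and `δᵢ xᵢ x_{i−1} < 0` just before; propagating along the cycle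
from a nonzero coordinate, `x(t₀ + ε)` fills every zero of `z` without a sign change and
`x(t₀ − ε)` fills every zero of `z` with a sign change.

Such fillings realise `N_m(z)` and `N_M(z)`: they are approached by `z + c w`, `c → 0⁺`, and any
`y ∈ Λ` near `z` is turned into `w` by flipping, one at a time, coordinates whose left neighbour
already agrees with `w`; each flip removes (resp. creates) a sign change at `i` and changes only
the edge `i + 1` besides, so `N` does not increase (resp. decrease) along the way.
-/

open Fin.NatCast Fin.CommRing Finset

theorem Fin.cyclic_induction {n : ℕ} [NeZero n] {P : Fin n → Prop} {j : Fin n} (hj : P j)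
    (hstep : ∀ i, P (i - 1) → P i) (i : Fin n) : P i := by
  have hiter : ∀ m : ℕ, P (j + m) := by
    intro m
    induction m with
    | zero => simpa using hj
    | succ m ih => exact hstep _ (by convert ih using 2; push_cast; ring)
  simpa using hiter (i - j).val

theorem Fin.exists_not_and_sub_one {n : ℕ} [NeZero n] {P : Fin n → Prop} {j k : Fin n}
    (hj : P j) (hk : ¬ P k) : ∃ i, ¬ P i ∧ P (i - 1) := by
  by_contra! h
  exact hk (Fin.cyclic_induction hj (fun i hi => by_contra fun hni => h i hni hi) k)

section SignChanges

variable {n : ℕ} [NeZero n]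

def cyclicEdge (n : ℕ) [NeZero n] (w : Fin n → ℝ) (i : Fin n) : ℝ :=
  cyclicDelta n i * w i * w (i - 1)

theorem cyclicN_eq_card (w : Fin n → ℝ) : cyclicN n w = #{i | cyclicEdge n w i < 0} := by
  rw [cyclicN, Nat.card_eq_fintype_card, Fintype.card_subtype]
  rfl

theorem cyclicDelta_ne_zero (i : Fin n) : cyclicDelta n i ≠ 0 := by
  unfold cyclicDelta; split_ifs <;> norm_num

theorem cyclicEdge_mul_cyclicEdge (y w : Fin n → ℝ) (i : Fin n) :
    cyclicEdge n y i * cyclicEdge n w i =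
      cyclicDelta n i ^ 2 * (y i * w i) * (y (i - 1) * w (i - 1)) := by
  unfold cyclicEdge; ring

theorem cyclicN_eq_of_pos_mul {y w : Fin n → ℝ} (h : ∀ i, 0 < y i * w i) :
    cyclicN n y = cyclicN n w := by
  simp only [cyclicN_eq_card]
  congr 1
  ext i
  simp only [mem_filter, mem_univ, true_and]
  have hprod : 0 < cyclicEdge n y i * cyclicEdge n w i := by
    rw [cyclicEdge_mul_cyclicEdge]
    have := cyclicDelta_ne_zero i
    have := h i
    have := h (i - 1)
    positivity
  constructor <;> intro h' <;> nlinarith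

/-- Changing `yᵢ` only affects the edges `i` and `i + 1`. -/
theorem cyclicN_update_le {y : Fin n → ℝ} {i : Fin n} {r : ℝ} (hi : cyclicEdge n y i < 0)
    (hr : 0 ≤ cyclicEdge n (Function.update y i r) i) :
    cyclicN n (Function.update y i r) ≤ cyclicN n y := by
  rw [cyclicN_eq_card, cyclicN_eq_card]
  have hsub : ({j | cyclicEdge n (Function.update y i r) j < 0} : Finset (Fin n)) ⊆
      insert (i + 1) (({j | cyclicEdge n y j < 0} : Finset (Fin n)).erase i) := by
    intro j hj
    simp only [mem_filter, mem_univ, true_and, mem_insert, mem_erase] at hj ⊢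
    by_cases hj1 : j = i + 1
    · exact Or.inl hj1
    have hji : j ≠ i := by rintro rfl; linarith
    have hj1i : j - 1 ≠ i := fun h => hj1 (by rw [← h]; ring)
    refine Or.inr ⟨hji, ?_⟩
    simpa [cyclicEdge, Function.update_of_ne hji, Function.update_of_ne hj1i] using hj
  calc #{j | cyclicEdge n (Function.update y i r) j < 0}
      ≤ #(insert (i + 1) (({j | cyclicEdge n y j < 0} : Finset (Fin n)).erase i)) :=
        card_le_card hsub
    _ ≤ #(({j | cyclicEdge n y j < 0} : Finset (Fin n)).erase i) + 1 := card_insert_le _ _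
    _ = #{j | cyclicEdge n y j < 0} := card_erase_add_one (by simpa using hi)

end SignChanges

section Sandwich

theorem neg_mul_of_update_neg_mul {ι : Type*} [DecidableEq ι] {y w : ι → ℝ} {i j : ι}
    (h : Function.update y i (w i) j * w j < 0) : j ≠ i ∧ y j * w j < 0 := by
  rcases eq_or_ne j i with rfl | hj
  · simp only [Function.update_self] at h; nlinarith
  · simpa [Function.update_of_ne hj, hj] using h

theorem card_neg_mul_update_lt {ι : Type*} [Fintype ι] [DecidableEq ι] {y w : ι → ℝ} {i : ι}
    (hi : y i * w i < 0) :
    #{j | Function.update y i (w i) j * w j < 0} < #{j | y j * w j < 0} := by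
  refine card_lt_card ((ssubset_iff_of_subset fun j hj => ?_).2 ⟨i, ?_, ?_⟩)
  · simp only [mem_filter, mem_univ, true_and] at hj ⊢
    exact (neg_mul_of_update_neg_mul hj).2
  · simpa using hi
  · simp only [mem_filter, mem_univ, true_and, not_lt, Function.update_self]
    exact mul_self_nonneg _

variable {n : ℕ} [NeZero n] {y w : Fin n → ℝ}

theorem update_mem_cyclicLambda (hy : y ∈ cyclicLambda n) {i : Fin n} {r : ℝ} (hr : r ≠ 0) :
    Function.update y i r ∈ cyclicLambda n := by
  intro j
  rcases eq_or_ne j i with rfl | hj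
  · simpa using hr
  · simpa [Function.update_of_ne hj] using hy j

theorem cyclicLambda_induction (hw : w ∈ cyclicLambda n) {P : (Fin n → ℝ) → Prop}
    (hbase : ∀ y ∈ cyclicLambda n, (∀ i, 0 < y i * w i) → P y)
    (hflip : ∀ y ∈ cyclicLambda n, ∀ i, y i * w i < 0 → 0 < y (i - 1) * w (i - 1) →
      P (Function.update y i (w i)) → P y)
    (hy : y ∈ cyclicLambda n) (hk : ∃ k, 0 < y k * w k) : P y := by
  induction hm : #{j | y j * w j < 0} using Nat.strong_induction_on generalizing y with
  | _ m ih =>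
  by_cases hD : ∃ j, y j * w j < 0
  · obtain ⟨j, hj⟩ := hD
    obtain ⟨k, hk⟩ := hk
    obtain ⟨i, hi, hi1⟩ := Fin.exists_not_and_sub_one (P := fun i => 0 < y i * w i) hk hj.not_gt
    have hi : y i * w i < 0 := (not_lt.1 hi).lt_of_ne (mul_ne_zero (hy i) (hw i))
    exact hflip y hy i hi hi1 (ih _ (hm ▸ card_neg_mul_update_lt hi)
      (update_mem_cyclicLambda hy (hw i)) ⟨i, by simpa using mul_self_pos.2 (hw i)⟩ rfl)
  · push Not at hD
    exact hbase y hy fun i => (hD i).lt_of_ne' (mul_ne_zero (hy i) (hw i))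

theorem cyclicEdge_mul_neg_and_update_mul_pos {i : Fin n} (hi : y i * w i < 0)
    (hi1 : 0 < y (i - 1) * w (i - 1)) :
    cyclicEdge n y i * cyclicEdge n w i < 0 ∧
      0 < cyclicEdge n (Function.update y i (w i)) i * cyclicEdge n w i := by
  have hne : i - 1 ≠ i := fun h => by rw [h] at hi1; linarith
  have hδ : 0 < cyclicDelta n i ^ 2 := sq_pos_of_ne_zero (cyclicDelta_ne_zero i)
  have hwi : w i ≠ 0 := by rintro h; simp [h] at hi
  rw [cyclicEdge_mul_cyclicEdge, cyclicEdge_mul_cyclicEdge, Function.update_self,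
    Function.update_of_ne hne]
  constructor
  · nlinarith [mul_pos hδ hi1]
  · have := mul_self_pos.2 hwi
    positivity

theorem cyclicN_le_of_pos_cyclicEdge (hy : y ∈ cyclicLambda n) (hw : w ∈ cyclicLambda n)
    (hagree : ∃ k, 0 < y k * w k) (hedge : ∀ i, y i * w i < 0 → 0 < cyclicEdge n w i) :
    cyclicN n w ≤ cyclicN n y := by
  refine cyclicLambda_induction hw (P := fun y => (∀ i, y i * w i < 0 → 0 < cyclicEdge n w i) →
    cyclicN n w ≤ cyclicN n y) (fun y _ h _ => (cyclicN_eq_of_pos_mul h).ge) ?_ hy hagree hedge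
  intro y _ i hi hi1 ih hedge
  obtain ⟨h₁, h₂⟩ := cyclicEdge_mul_neg_and_update_mul_pos hi hi1
  have := hedge i hi
  calc cyclicN n w ≤ cyclicN n (Function.update y i (w i)) :=
        ih fun j hj => hedge j (neg_mul_of_update_neg_mul hj).2
    _ ≤ cyclicN n y := cyclicN_update_le (by nlinarith) (by nlinarith)

theorem cyclicN_le_of_neg_cyclicEdge (hy : y ∈ cyclicLambda n) (hw : w ∈ cyclicLambda n)
    (hagree : ∃ k, 0 < y k * w k) (hedge : ∀ i, y i * w i < 0 → cyclicEdge n w i < 0) :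
    cyclicN n y ≤ cyclicN n w := by
  refine cyclicLambda_induction hw (P := fun y => (∀ i, y i * w i < 0 → cyclicEdge n w i < 0) →
    cyclicN n y ≤ cyclicN n w) (fun y _ h _ => (cyclicN_eq_of_pos_mul h).le) ?_ hy hagree hedge
  intro y _ i hi hi1 ih hedge
  obtain ⟨h₁, h₂⟩ := cyclicEdge_mul_neg_and_update_mul_pos hi hi1
  have := hedge i hi
  have hback : Function.update (Function.update y i (w i)) i (y i) = y := by simp
  calc cyclicN n y = cyclicN n (Function.update (Function.update y i (w i)) i (y i)) := by
        rw [hback]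
    _ ≤ cyclicN n (Function.update y i (w i)) :=
        cyclicN_update_le (by nlinarith) (by rw [hback]; nlinarith)
    _ ≤ cyclicN n w := ih fun j hj => hedge j (neg_mul_of_update_neg_mul hj).2

end Sandwich

section Fill

theorem pos_mul_of_pos_mul_of_pos_mul {a b c : ℝ} (hb : 0 < a * b) (hc : 0 < a * c) :
    0 < b * c :=
  pos_of_mul_pos_right (by nlinarith [mul_pos hb hc]) (sq_nonneg a)

theorem eq_zero_of_mul_neg {a b c : ℝ} (hb : a ≠ 0 → 0 < a * b) (hc : a ≠ 0 → 0 < a * c)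
    (h : b * c < 0) : a = 0 := by
  by_contra ha
  exact h.not_gt (pos_mul_of_pos_mul_of_pos_mul (hb ha) (hc ha))

theorem eventually_pos_mul_of_ne_zero {ι : Type*} [Finite ι] (z : ι → ℝ) :
    ∀ᶠ y in 𝓝 z, ∀ i, z i ≠ 0 → 0 < z i * y i := by
  refine eventually_all.2 fun i => ?_
  by_cases hi : z i = 0
  · exact Eventually.of_forall fun _ h => absurd hi h
  · have hcont : Continuous fun y : ι → ℝ => z i * y i := by fun_prop
    exact (hcont.tendsto z).eventually (lt_mem_nhds (mul_self_pos.2 hi)) |>.mono fun _ h _ => h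

variable {n : ℕ} [NeZero n] {z w : Fin n → ℝ}

structure IsMinFill (z w : Fin n → ℝ) : Prop where
  pos_mul : ∀ i, z i ≠ 0 → 0 < z i * w i
  cyclicEdge_pos : ∀ i, z i = 0 → 0 < cyclicEdge n w i

structure IsMaxFill (z w : Fin n → ℝ) : Prop where
  pos_mul : ∀ i, z i ≠ 0 → 0 < z i * w i
  cyclicEdge_neg : ∀ i, z i = 0 → cyclicEdge n w i < 0

theorem mem_cyclicLambda_of_cyclicEdge_ne_zero (hpos : ∀ i, z i ≠ 0 → 0 < z i * w i)
    (hedge : ∀ i, z i = 0 → cyclicEdge n w i ≠ 0) : w ∈ cyclicLambda n := by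
  intro i hwi
  by_cases hzi : z i = 0
  · exact hedge i hzi (by simp [cyclicEdge, hwi])
  · simpa [hwi] using hpos i hzi

theorem IsMinFill.mem_cyclicLambda (hw : IsMinFill z w) : w ∈ cyclicLambda n :=
  mem_cyclicLambda_of_cyclicEdge_ne_zero hw.pos_mul fun i hi => (hw.cyclicEdge_pos i hi).ne'

theorem IsMaxFill.mem_cyclicLambda (hw : IsMaxFill z w) : w ∈ cyclicLambda n :=
  mem_cyclicLambda_of_cyclicEdge_ne_zero hw.pos_mul fun i hi => (hw.cyclicEdge_neg i hi).ne

theorem isMinFill_self (hw : w ∈ cyclicLambda n) : IsMinFill w w :=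
  ⟨fun _ hi => mul_self_pos.2 hi, fun _ hi => absurd hi (hw _)⟩

theorem isMaxFill_self (hw : w ∈ cyclicLambda n) : IsMaxFill w w :=
  ⟨fun _ hi => mul_self_pos.2 hi, fun _ hi => absurd hi (hw _)⟩

theorem frequently_cyclicN_eq (hw : w ∈ cyclicLambda n) (hzw : ∀ i, z i ≠ 0 → 0 < z i * w i) :
    ∃ᶠ y in 𝓝[cyclicLambda n] z, cyclicN n y = cyclicN n w := by
  have hpos : ∀ c : ℝ, 0 < c → ∀ i, 0 < (z + c • w) i * w i := by
    intro c hc i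
    have := mul_self_pos.2 (hw i)
    by_cases hi : z i = 0
    · simp only [Pi.add_apply, Pi.smul_apply, smul_eq_mul, hi]; nlinarith [mul_pos hc this]
    · have := hzw i hi
      simp only [Pi.add_apply, Pi.smul_apply, smul_eq_mul]; nlinarith
  have hlim : Tendsto (fun c : ℝ => z + c • w) (𝓝[>] 0) (𝓝[cyclicLambda n] z) := by
    refine tendsto_nhdsWithin_iff.2 ⟨?_, ?_⟩
    · have : Continuous fun c : ℝ => z + c • w := by fun_prop
      simpa using (this.tendsto 0).mono_left nhdsWithin_le_nhds
    · filter_upwards [self_mem_nhdsWithin] with c hc i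
      exact left_ne_zero_of_mul (hpos c hc i).ne'
  refine hlim.frequently (Eventually.frequently ?_)
  filter_upwards [self_mem_nhdsWithin] with c hc using cyclicN_eq_of_pos_mul (hpos c hc)

theorem exists_of_frequently_cyclicN_eq {k : ℕ}
    (hk : ∃ᶠ y in 𝓝[cyclicLambda n] z, cyclicN n y = k) :
    ∃ y ∈ cyclicLambda n, cyclicN n y = k ∧ ∀ i, z i ≠ 0 → 0 < z i * y i := by
  obtain ⟨y, ⟨hyk, hzy⟩, hy⟩ := ((hk.and_eventually (eventually_nhdsWithin_of_eventually_nhds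
    (eventually_pos_mul_of_ne_zero z))).and_eventually self_mem_nhdsWithin).exists
  exact ⟨y, hy, hyk, hzy⟩

theorem cyclicNm_eq_of_isMinFill (hz : z ≠ 0) (hw : IsMinFill z w) :
    cyclicNm n z = cyclicN n w := by
  refine IsLeast.csInf_eq ⟨frequently_cyclicN_eq hw.mem_cyclicLambda hw.pos_mul, ?_⟩
  rintro k hk
  obtain ⟨y, hy, rfl, hzy⟩ := exists_of_frequently_cyclicN_eq hk
  obtain ⟨j, hj⟩ : ∃ j, z j ≠ 0 := Function.ne_iff.1 hz
  exact cyclicN_le_of_pos_cyclicEdge hy hw.mem_cyclicLambda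
    ⟨j, pos_mul_of_pos_mul_of_pos_mul (hzy j hj) (hw.pos_mul j hj)⟩
    fun i hi => hw.cyclicEdge_pos i (eq_zero_of_mul_neg (hzy i) (hw.pos_mul i) hi)

theorem cyclicNM_eq_of_isMaxFill (hz : z ≠ 0) (hw : IsMaxFill z w) :
    cyclicNM n z = cyclicN n w := by
  refine IsGreatest.csSup_eq ⟨frequently_cyclicN_eq hw.mem_cyclicLambda hw.pos_mul, ?_⟩
  rintro k hk
  obtain ⟨y, hy, rfl, hzy⟩ := exists_of_frequently_cyclicN_eq hk
  obtain ⟨j, hj⟩ : ∃ j, z j ≠ 0 := Function.ne_iff.1 hz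
  exact cyclicN_le_of_neg_cyclicEdge hy hw.mem_cyclicLambda
    ⟨j, pos_mul_of_pos_mul_of_pos_mul (hzy j hj) (hw.pos_mul j hj)⟩
    fun i hi => hw.cyclicEdge_neg i (eq_zero_of_mul_neg (hzy i) (hw.pos_mul i) hi)

theorem cyclicNm_eq_cyclicN (hw : w ∈ cyclicLambda n) : cyclicNm n w = cyclicN n w :=
  cyclicNm_eq_of_isMinFill (fun h => hw 0 (by simp [h])) (isMinFill_self hw)

theorem cyclicNM_eq_cyclicN (hw : w ∈ cyclicLambda n) : cyclicNM n w = cyclicN n w :=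
  cyclicNM_eq_of_isMaxFill (fun h => hw 0 (by simp [h])) (isMaxFill_self hw)

theorem mem_cyclicGood_of_mem_cyclicLambda (hw : w ∈ cyclicLambda n) : w ∈ cyclicGood n :=
  (cyclicNm_eq_cyclicN hw).trans (cyclicNM_eq_cyclicN hw).symm

end Fill

section LinearODE

open Real

/-- Integrating factor: `(e^{-∫a} f)' = e^{-∫a} b` for `f' = a f + b`. -/
theorem strictMonoOn_exp_neg_integral_mul {a b f : ℝ → ℝ} (ha : Continuous a)
    (hf : ∀ t, HasDerivAt f (a t * f t + b t) t) {s : Set ℝ} (hs : Convex ℝ s)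
    (hb : ∀ t ∈ interior s, 0 < b t) :
    StrictMonoOn (fun t => exp (-∫ u in (0 : ℝ)..t, a u) * f t) s := by
  have hderiv : ∀ t, HasDerivAt (fun t => exp (-∫ u in (0 : ℝ)..t, a u) * f t)
      (exp (-∫ u in (0 : ℝ)..t, a u) * b t) t := fun t => by
    refine (((ha.integral_hasStrictDerivAt 0 t).hasDerivAt.neg.exp).mul (hf t)).congr_deriv ?_
    rw [Pi.neg_apply]
    ring
  exact strictMonoOn_of_hasDerivWithinAt_pos hs
    (fun t _ => (hderiv t).continuousAt.continuousWithinAt)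
    (fun t _ => (hderiv t).hasDerivWithinAt) fun t ht => mul_pos (exp_pos _) (hb t ht)

theorem eventually_nhdsGT_pos_of_hasDerivAt {a b f : ℝ → ℝ} {t₀ : ℝ} (ha : Continuous a)
    (hf : ∀ t, HasDerivAt f (a t * f t + b t) t) (hf₀ : f t₀ = 0)
    (hb : ∀ᶠ t in 𝓝[>] t₀, 0 < b t) : ∀ᶠ t in 𝓝[>] t₀, 0 < f t := by
  obtain ⟨u, hu, hsub⟩ := mem_nhdsGT_iff_exists_Ioo_subset.1 hb
  have hmono := strictMonoOn_exp_neg_integral_mul ha hf (convex_Ico t₀ u)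
    (by rw [interior_Ico]; exact hsub)
  filter_upwards [Ioo_mem_nhdsGT hu] with t ht
  have := hmono ⟨le_rfl, hu⟩ ⟨ht.1.le, ht.2⟩ ht.1
  simp only [hf₀, mul_zero] at this
  exact pos_of_mul_pos_right this (exp_pos _).le

theorem eventually_nhdsLT_neg_of_hasDerivAt {a b f : ℝ → ℝ} {t₀ : ℝ} (ha : Continuous a)
    (hf : ∀ t, HasDerivAt f (a t * f t + b t) t) (hf₀ : f t₀ = 0)
    (hb : ∀ᶠ t in 𝓝[<] t₀, 0 < b t) : ∀ᶠ t in 𝓝[<] t₀, f t < 0 := by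
  obtain ⟨l, hl, hsub⟩ := mem_nhdsLT_iff_exists_Ioo_subset.1 hb
  have hmono := strictMonoOn_exp_neg_integral_mul ha hf (convex_Ioc l t₀)
    (by rw [interior_Ioc]; exact hsub)
  filter_upwards [Ioo_mem_nhdsLT hl] with t ht
  have := hmono ⟨ht.1, ht.2.le⟩ ⟨hl, le_rfl⟩ ht.2
  simp only [hf₀, mul_zero] at this
  exact neg_of_mul_neg_right this (exp_pos _).le

theorem lipschitzWith_cyclic {n : ℕ} [NeZero n] {d s : Fin n → ℝ} {K : NNReal}
    (hK : ∀ i, |d i| + |s i| ≤ K) :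
    LipschitzWith K fun (y : Fin n → ℝ) i => d i * y i + s i * y (i - 1) := by
  refine LipschitzWith.of_dist_le_mul fun y y' => (dist_pi_le_iff (by positivity)).2 fun i => ?_
  have h₁ : |y i - y' i| ≤ dist y y' := by simpa [Real.dist_eq] using dist_le_pi_dist y y' i
  have h₂ : |y (i - 1) - y' (i - 1)| ≤ dist y y' := by
    simpa [Real.dist_eq] using dist_le_pi_dist y y' (i - 1)
  rw [Real.dist_eq]
  calc |d i * y i + s i * y (i - 1) - (d i * y' i + s i * y' (i - 1))|
      = |d i * (y i - y' i) + s i * (y (i - 1) - y' (i - 1))| := by congr 1; ring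
    _ ≤ |d i| * |y i - y' i| + |s i| * |y (i - 1) - y' (i - 1)| := by
        rw [← abs_mul, ← abs_mul]; exact abs_add_le _ _
    _ ≤ |d i| * dist y y' + |s i| * dist y y' := by gcongr
    _ ≤ K * dist y y' := by rw [← add_mul]; gcongr; exact hK i

end LinearODE

section Solution

variable {n : ℕ} [NeZero n] {S : LinCNF n} {x : ℝ → Fin n → ℝ} {t₀ : ℝ}

theorem LinCNF.IsSolution.continuous (hsol : S.IsSolution x) : Continuous x :=
  continuous_pi fun i => continuous_iff_continuousAt.2 fun t => (hsol t i).continuousAt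

theorem LinCNF.IsSolution.eq_zero_of_eq_zero (hsol : S.IsSolution x) (h : x t₀ = 0) (t : ℝ) :
    x t = 0 := by
  have hlocal : ∀ t₁, x t₁ = 0 → x =ᶠ[𝓝 t₁] 0 := by
    intro t₁ h₁
    let C : ℝ → ℝ := fun t => ∑ i, (|S.diag t i| + |S.sub t i|)
    have hC : Continuous C :=
      continuous_finsetSum _ fun i _ => (S.cont_diag i).abs.add (S.cont_sub i).abs
    have hv : ∀ᶠ t in 𝓝 t₁, LipschitzOnWith (C t₁ + 1).toNNReal
        (fun (y : Fin n → ℝ) i => S.diag t i * y i + S.sub t i * y (i - 1)) Set.univ := by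
      filter_upwards [(hC.tendsto t₁).eventually (gt_mem_nhds (lt_add_one (C t₁)))] with t ht
      refine (lipschitzWith_cyclic fun i => ?_).lipschitzOnWith
      calc |S.diag t i| + |S.sub t i| ≤ C t :=
            single_le_sum (f := fun i => |S.diag t i| + |S.sub t i|)
              (fun j _ => by positivity) (mem_univ i)
        _ ≤ _ := ht.le.trans (Real.le_coe_toNNReal _)
    exact ODE_solution_unique_of_eventually hv
      (Eventually.of_forall fun t => ⟨hasDerivAt_pi.2 (hsol t), Set.mem_univ _⟩)
      (Eventually.of_forall fun t =>
        ⟨(hasDerivAt_const t (0 : Fin n → ℝ)).congr_deriv (by ext; simp), Set.mem_univ _⟩) h₁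
  have hclopen : IsClopen {t | x t = 0} :=
    ⟨isClosed_eq hsol.continuous continuous_const,
      isOpen_iff_mem_nhds.2 fun t ht => hlocal t ht⟩
  exact (hclopen.eq_univ ⟨t₀, h⟩).ge (Set.mem_univ t)

theorem LinCNF.delta_mul_sub_pos (S : LinCNF n) (t : ℝ) (i : Fin n) :
    0 < cyclicDelta n i * S.sub t i := by
  unfold cyclicDelta
  split_ifs with h
  · subst h; linarith [S.sub_neg t]
  · simpa using S.sub_pos t i h

theorem LinCNF.IsSolution.eventually_nhdsGT_pos (hsol : S.IsSolution x) {i : Fin n}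
    (hi : x t₀ i = 0) {c : ℝ} (hc : ∀ᶠ t in 𝓝[>] t₀, 0 < c * x t (i - 1)) :
    ∀ᶠ t in 𝓝[>] t₀, 0 < cyclicDelta n i * c * x t i :=
  eventually_nhdsGT_pos_of_hasDerivAt
    (b := fun t => cyclicDelta n i * S.sub t i * (c * x t (i - 1))) (S.cont_diag i)
    (fun t => ((hsol t i).const_mul (cyclicDelta n i * c)).congr_deriv (by ring))
    (by simp [hi]) (hc.mono fun t ht => mul_pos (S.delta_mul_sub_pos t i) ht)

theorem LinCNF.IsSolution.eventually_nhdsLT_neg (hsol : S.IsSolution x) {i : Fin n}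
    (hi : x t₀ i = 0) {c : ℝ} (hc : ∀ᶠ t in 𝓝[<] t₀, 0 < c * x t (i - 1)) :
    ∀ᶠ t in 𝓝[<] t₀, cyclicDelta n i * c * x t i < 0 :=
  eventually_nhdsLT_neg_of_hasDerivAt
    (b := fun t => cyclicDelta n i * S.sub t i * (c * x t (i - 1))) (S.cont_diag i)
    (fun t => ((hsol t i).const_mul (cyclicDelta n i * c)).congr_deriv (by ring))
    (by simp [hi]) (hc.mono fun t ht => mul_pos (S.delta_mul_sub_pos t i) ht)

theorem exists_eventually_pos_mul {l : Filter ℝ} (hl : l ≤ 𝓝 t₀) (hx : Continuous x)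
    (hz : x t₀ ≠ 0)
    (hprop : ∀ i c, x t₀ i = 0 → (∀ᶠ t in l, 0 < c * x t (i - 1)) →
      ∃ c', ∀ᶠ t in l, 0 < c' * x t i) (i : Fin n) :
    ∃ c, ∀ᶠ t in l, 0 < c * x t i := by
  obtain ⟨j, hj⟩ : ∃ j, x t₀ j ≠ 0 := Function.ne_iff.1 hz
  have hnear : ∀ᶠ t in l, ∀ i, x t₀ i ≠ 0 → 0 < x t₀ i * x t i :=
    hl ((hx.tendsto t₀).eventually (eventually_pos_mul_of_ne_zero _))
  refine Fin.cyclic_induction (P := fun i => ∃ c, ∀ᶠ t in l, 0 < c * x t i)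
    ⟨_, hnear.mono fun t h => h j hj⟩ (fun i ⟨c, hc⟩ => ?_) i
  by_cases hi : x t₀ i = 0
  · exact hprop i c hi hc
  · exact ⟨_, hnear.mono fun t h => h i hi⟩

theorem LinCNF.IsSolution.eventually_isMinFill (hsol : S.IsSolution x) (hz : x t₀ ≠ 0) :
    ∀ᶠ t in 𝓝[>] t₀, IsMinFill (x t₀) (x t) := by
  have hsign := exists_eventually_pos_mul nhdsWithin_le_nhds hsol.continuous hz
    fun i c hi hc => ⟨_, hsol.eventually_nhdsGT_pos hi hc⟩
  have hedge : ∀ᶠ t in 𝓝[>] t₀, ∀ i, x t₀ i = 0 → 0 < cyclicEdge n (x t) i := by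
    refine eventually_all.2 fun i => ?_
    obtain ⟨c, hc⟩ := hsign (i - 1)
    by_cases hi : x t₀ i = 0
    · filter_upwards [hc, hsol.eventually_nhdsGT_pos hi hc] with t h₁ h₂ _
      refine pos_of_mul_pos_right (a := c ^ 2) ?_ (sq_nonneg c)
      unfold cyclicEdge
      linarith [mul_pos h₁ h₂]
    · exact Eventually.of_forall fun _ h => absurd h hi
  filter_upwards [nhdsWithin_le_nhds ((hsol.continuous.tendsto t₀).eventually
    (eventually_pos_mul_of_ne_zero _)), hedge] with t h₁ h₂ using ⟨h₁, h₂⟩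

theorem LinCNF.IsSolution.eventually_isMaxFill (hsol : S.IsSolution x) (hz : x t₀ ≠ 0) :
    ∀ᶠ t in 𝓝[<] t₀, IsMaxFill (x t₀) (x t) := by
  have hsign := exists_eventually_pos_mul nhdsWithin_le_nhds hsol.continuous hz
    fun i c hi hc => ⟨-(cyclicDelta n i * c), (hsol.eventually_nhdsLT_neg hi hc).mono
      fun _ h => by linarith⟩
  have hedge : ∀ᶠ t in 𝓝[<] t₀, ∀ i, x t₀ i = 0 → cyclicEdge n (x t) i < 0 := by
    refine eventually_all.2 fun i => ?_
    obtain ⟨c, hc⟩ := hsign (i - 1)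
    by_cases hi : x t₀ i = 0
    · filter_upwards [hc, hsol.eventually_nhdsLT_neg hi hc] with t h₁ h₂ _
      refine neg_of_mul_neg_right (a := c ^ 2) ?_ (sq_nonneg c)
      unfold cyclicEdge
      linarith [mul_neg_of_pos_of_neg h₁ h₂]
    · exact Eventually.of_forall fun _ h => absurd h hi
  filter_upwards [nhdsWithin_le_nhds ((hsol.continuous.tendsto t₀).eventually
    (eventually_pos_mul_of_ne_zero _)), hedge] with t h₁ h₂ using ⟨h₁, h₂⟩

end Solution

theorem stmt3_general (n : ℕ) [NeZero n] (S : LinCNF n) (x : ℝ → Fin n → ℝ)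
    (hsol : S.IsSolution x) (hnontriv : ¬ ∀ t, x t = 0) (t₀ : ℝ) :
    ∃ ε₀ > (0 : ℝ), ∀ ε : ℝ, 0 < ε → ε < ε₀ →
      (x (t₀ + ε) ∈ cyclicGood n ∧ cyclicNm n (x (t₀ + ε)) = cyclicNm n (x t₀)) ∧
      (x (t₀ - ε) ∈ cyclicGood n ∧ cyclicNm n (x (t₀ - ε)) = cyclicNM n (x t₀)) := by
  have hz : x t₀ ≠ 0 := fun h => hnontriv (hsol.eq_zero_of_eq_zero h)
  obtain ⟨u, hu, hright⟩ := mem_nhdsGT_iff_exists_Ioo_subset.1 (hsol.eventually_isMinFill hz)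
  obtain ⟨l, hl, hleft⟩ := mem_nhdsLT_iff_exists_Ioo_subset.1 (hsol.eventually_isMaxFill hz)
  refine ⟨min (u - t₀) (t₀ - l), lt_min (sub_pos.2 hu) (sub_pos.2 hl), fun ε hε hεlt => ?_⟩
  have hw_right : IsMinFill (x t₀) (x (t₀ + ε)) :=
    hright ⟨by linarith, by linarith [min_le_left (u - t₀) (t₀ - l)]⟩
  have hw_left : IsMaxFill (x t₀) (x (t₀ - ε)) :=
    hleft ⟨by linarith [min_le_right (u - t₀) (t₀ - l)], by linarith⟩
  have hright_mem := hw_right.mem_cyclicLambda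
  have hleft_mem := hw_left.mem_cyclicLambda
  exact ⟨⟨mem_cyclicGood_of_mem_cyclicLambda hright_mem,
      by rw [cyclicNm_eq_cyclicN hright_mem, cyclicNm_eq_of_isMinFill hz hw_right]⟩,
    ⟨mem_cyclicGood_of_mem_cyclicLambda hleft_mem,
      by rw [cyclicNm_eq_cyclicN hleft_mem, cyclicNM_eq_of_isMaxFill hz hw_left]⟩⟩

/-- If `x(t₀) ∉ 𝒩` then for all small `ε > 0`,
`x(t₀ + ε) ∈ 𝒩` with `N(x(t₀ + ε)) = N_m(x(t₀))` and `x(t₀ − ε) ∈ 𝒩` with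
`N(x(t₀ − ε)) = N_M(x(t₀))`. -/
theorem stmt3 (n : ℕ) [NeZero n] (hn : 2 ≤ n) (S : LinCNF n) (x : ℝ → Fin n → ℝ)
    (hsol : S.IsSolution x) (hnontriv : ¬ ∀ t, x t = 0)
    (t₀ : ℝ) (h₀ : x t₀ ∉ cyclicGood n) :
    ∃ ε₀ > (0 : ℝ), ∀ ε : ℝ, 0 < ε → ε < ε₀ →
      (x (t₀ + ε) ∈ cyclicGood n ∧ cyclicNm n (x (t₀ + ε)) = cyclicNm n (x t₀)) ∧
      (x (t₀ - ε) ∈ cyclicGood n ∧ cyclicNm n (x (t₀ - ε)) = cyclicNM n (x t₀)) :=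
  stmt3_general n S x hsol hnontriv t₀
end

section
/- Let Φ(t) be the fundamental matrix solution of the linear cyclic negative feedback system with Φ(0) = I, and let 1 ≤ h ≤ (ñ+1)/2. Then for every t > 0, Φ(t) maps K̄_h \ {0} into the interior of K̄_h; explicitly, for every x₀ in the closure of K_h with x₀ ≠ 0 and every t > 0, one has Φ(t)x₀ ≠ 0 and N_M(Φ(t)x₀) ≤ 2h − 1 (i.e., Φ(t)x₀ ∈ K_h \ {0}, which equals the interior of K̄_h). -/
open Filter Topology

/-!
For `a ≠ 0` with zero set `Z`, the values of `N` on `Λ` near `a` are the values `N σ` of the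
nowhere vanishing `σ` that have the sign of `a` off `Z`. Among these, `N` is least when `σ` has no
sign change at any `k ∈ Z` and greatest when it has one at every `k ∈ Z`; this is seen by fixing the
sign of `σ` one zero at a time, starting with the last zero of a block.

Along a solution with `x t ≠ 0`, at a coordinate with `x t k = 0` the equation
`ẋₖ = aₖₖ xₖ + aₖ,ₖ₋₁ xₖ₋₁` makes `δₖ xₖ xₖ₋₁` positive just after `t` and negative just before `t`
(the sign of `xₖ₋₁` near `t` being already known, by induction along the zero block). Hence
`N_m (x ·)` is nonincreasing, and `N_M (x t) = N (x s) = N_m (x s)` for `s` slightly less than `t`.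
Grönwall's inequality keeps `x t ≠ 0`, and a nonzero `x₀` in the closure of `K_h` has
`N_m x₀ ≤ N_M z ≤ 2h - 1` for some `z ∈ K_h` close to `x₀`.
-/

open Finset Function Fin.NatCast

lemma mul_pos_of_mul_pos_of_mul_pos {α : Type*} [CommRing α] [LinearOrder α] [IsStrictOrderedRing α]
    {p q r : α} (hpq : 0 < p * q) (hqr : 0 < q * r) : 0 < p * r := by
  have h := mul_pos hpq hqr
  rw [show p * q * (q * r) = p * r * (q * q) by ring] at h
  exact (mul_pos_iff_of_pos_right (mul_self_pos.2 (right_ne_zero_of_mul hpq.ne'))).1 h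

lemma filter_eq_zero_ne_univ {ι M : Type*} [Fintype ι] [Zero M] [DecidableEq M] {a : ι → M}
    (ha : a ≠ 0) : ({k | a k = 0} : Finset ι) ≠ univ := fun h => ha <| funext fun k => by
  have hk : k ∈ ({k | a k = 0} : Finset ι) := by rw [h]; exact mem_univ k
  simpa using hk

lemma eventually_mul_pos_nhds {ι : Type*} [Finite ι] (a : ι → ℝ) :
    ∀ᶠ y in 𝓝 a, ∀ i, a i ≠ 0 → 0 < y i * a i :=
  eventually_all.2 fun i => by
    by_cases hi : a i = 0
    · exact Eventually.of_forall fun _ h => absurd hi h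
    · have hcont : ContinuousAt (fun y : ι → ℝ => y i * a i) a :=
        ((continuous_apply i).mul continuous_const).continuousAt
      filter_upwards [hcont.eventually (lt_mem_nhds (mul_self_pos.2 hi))] with y hy _ using hy

lemma Fin.exists_mem_add_one_notMem {n : ℕ} [NeZero n] {Z : Finset (Fin n)} (hne : Z.Nonempty)
    (hZ : Z ≠ univ) : ∃ j ∈ Z, j + 1 ∉ Z := by
  by_contra! hclosed
  obtain ⟨z, hz⟩ := hne
  have hall : ∀ k : ℕ, z + (k : Fin n) ∈ Z := by
    intro k
    induction k with
    | zero => simpa using hz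
    | succ k ih => simpa [add_assoc] using hclosed _ ih
  refine hZ (eq_univ_of_forall fun i => ?_)
  simpa using hall (i - z).val

lemma Fin.forall_of_ne_zero_of_sub_one {n : ℕ} [NeZero n] {M : Type*} [Zero M] {a : Fin n → M}
    (ha : a ≠ 0) {P : Fin n → Prop} (hbase : ∀ i, a i ≠ 0 → P i)
    (hstep : ∀ i, a i = 0 → P (i - 1) → P i) : ∀ i, P i := by
  obtain ⟨j, hj⟩ := Function.ne_iff.1 ha
  have hall : ∀ k : ℕ, P (j + (k : Fin n)) := by
    intro k
    induction k with
    | zero => simpa using hbase j hj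
    | succ k ih =>
      by_cases hk : a (j + ((k + 1 : ℕ) : Fin n)) = 0
      · exact hstep _ hk (by rwa [Nat.cast_succ, ← add_assoc, add_sub_cancel_right])
      · exact hbase _ hk
  intro i
  simpa using hall (i - j).val

lemma strictMonoOn_mul_exp_neg_integral {y α β : ℝ → ℝ} (hα : Continuous α)
    (hy : ∀ s, HasDerivAt y (α s * y s + β s) s) {p q : ℝ} (hβ : ∀ s ∈ Set.Ioo p q, 0 < β s) :
    StrictMonoOn (fun s => y s * Real.exp (-∫ r in (0 : ℝ)..s, α r)) (Set.Icc p q) := by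
  have hderiv : ∀ s, HasDerivAt (fun s => y s * Real.exp (-∫ r in (0 : ℝ)..s, α r))
      (β s * Real.exp (-∫ r in (0 : ℝ)..s, α r)) s := fun s =>
    ((hy s).fun_mul (hα.integral_hasStrictDerivAt 0 s).hasDerivAt.fun_neg.exp).congr_deriv (by ring)
  refine strictMonoOn_of_deriv_pos (convex_Icc p q)
    (fun s _ => (hderiv s).continuousAt.continuousWithinAt) fun s hs => ?_
  rw [interior_Icc] at hs
  rw [(hderiv s).deriv]
  exact mul_pos (hβ s hs) (Real.exp_pos _)

theorem le_of_eventually_nhdsGT_of_eventually_nhdsLT {α : Type*} [Preorder α] {f : ℝ → α}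
    {a b : ℝ} (hab : a ≤ b) (hright : ∀ c ∈ Set.Ico a b, ∀ᶠ w in 𝓝[>] c, f w ≤ f c)
    (hleft : ∀ c ∈ Set.Ioc a b, ∀ᶠ w in 𝓝[<] c, f c ≤ f w) : f b ≤ f a := by
  -- `sSup B` lies in `B` by `hleft`, and then equals `b` by `hright`.
  set B := {w ∈ Set.Icc a b | f w ≤ f a}
  have hB : BddAbove B := ⟨b, fun w hw => hw.1.2⟩
  have haB : a ∈ B := ⟨⟨le_rfl, hab⟩, le_rfl⟩
  have hac : a ≤ sSup B := le_csSup hB haB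
  have hcb : sSup B ≤ b := csSup_le ⟨a, haB⟩ fun w hw => hw.1.2
  have hcB : f (sSup B) ≤ f a := by
    rcases hac.eq_or_lt with h | h
    · rw [← h]
    obtain ⟨l, hl, hsub⟩ := mem_nhdsLT_iff_exists_Ioo_subset.1 (hleft _ ⟨h, hcb⟩)
    obtain ⟨w, hwB, hlw⟩ := exists_lt_of_lt_csSup ⟨a, haB⟩ hl
    rcases (le_csSup hB hwB).eq_or_lt with hwc | hwc
    · exact hwc ▸ hwB.2
    · exact (hsub ⟨hlw, hwc⟩).trans hwB.2
  rcases hcb.eq_or_lt with hcb | hcb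
  · exact hcb ▸ hcB
  obtain ⟨u, hu, hsub⟩ := mem_nhdsGT_iff_exists_Ioo_subset.1 (hright _ ⟨hac, hcb⟩)
  obtain ⟨w, hcw, hw⟩ := exists_between (lt_min hu hcb)
  have hwB : w ∈ B := ⟨⟨hac.trans hcw.le, hw.le.trans (min_le_right _ _)⟩,
    (hsub ⟨hcw, hw.trans_le (min_le_left _ _)⟩).trans hcB⟩
  exact absurd (le_csSup hB hwB) (not_le.2 hcw)

section SignChanges

variable {n : ℕ} [NeZero n]

def cyclicTerm (x : Fin n → ℝ) (i : Fin n) : ℝ := cyclicDelta n i * x i * x (i - 1)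

noncomputable def signChange (x : Fin n → ℝ) (i : Fin n) : ℕ := if cyclicTerm x i < 0 then 1 else 0

lemma signChange_le_one (x : Fin n → ℝ) (i : Fin n) : signChange x i ≤ 1 := by
  unfold signChange; split <;> omega

lemma cyclicN_eq_sum_signChange (x : Fin n → ℝ) : cyclicN n x = ∑ i, signChange x i := by
  rw [cyclicN, Nat.card_eq_fintype_card, Fintype.card_subtype, card_filter]
  rfl

lemma cyclicDelta_mul_self (i : Fin n) : cyclicDelta n i * cyclicDelta n i = 1 := by
  unfold cyclicDelta; split <;> norm_num

lemma cyclicN_le_card (x : Fin n → ℝ) : cyclicN n x ≤ n := by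
  rw [cyclicN_eq_sum_signChange]
  calc ∑ i, signChange x i ≤ ∑ _i : Fin n, 1 := sum_le_sum fun i _ => signChange_le_one x i
    _ = n := by simp

lemma cyclicN_congr {x y : Fin n → ℝ} (h : ∀ i, 0 < x i * y i) : cyclicN n x = cyclicN n y := by
  simp only [cyclicN_eq_sum_signChange]
  refine sum_congr rfl fun i _ => ?_
  have hprod : cyclicTerm x i * cyclicTerm y i
      = (cyclicDelta n i * cyclicDelta n i) * ((x i * y i) * (x (i - 1) * y (i - 1))) := by
    unfold cyclicTerm; ring
  rw [cyclicDelta_mul_self, one_mul] at hprod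
  simp only [signChange, neg_iff_neg_of_mul_pos (hprod ▸ mul_pos (h i) (h (i - 1)))]

lemma cyclicTerm_update_of_ne (x : Fin n → ℝ) {i j : Fin n} (v : ℝ) (hij : i ≠ j)
    (hij' : i ≠ j + 1) : cyclicTerm (update x j v) i = cyclicTerm x i := by
  have : i - 1 ≠ j := fun h => hij' (sub_eq_iff_eq_add.1 h)
  simp only [cyclicTerm, update_of_ne hij, update_of_ne this]

lemma cyclicN_update_add (x : Fin n → ℝ) {j : Fin n} (hj : j ≠ j + 1) (v : ℝ) :
    cyclicN n (update x j v) + (signChange x j + signChange x (j + 1))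
      = cyclicN n x + (signChange (update x j v) j + signChange (update x j v) (j + 1)) := by
  simp only [cyclicN_eq_sum_signChange, ← sum_add_sum_compl {j, j + 1}, sum_pair hj]
  have hcompl :
      ∑ i ∈ {j, j + 1}ᶜ, signChange (update x j v) i = ∑ i ∈ {j, j + 1}ᶜ, signChange x i :=
    sum_congr rfl fun i hi => by
      simp only [mem_compl, mem_insert, mem_singleton, not_or] at hi
      simp only [signChange, cyclicTerm_update_of_ne x v hi.1 hi.2]
  rw [hcompl]
  ring

lemma update_of_mem_of_add_one_notMem {Z : Finset (Fin n)} {σ τ : Fin n → ℝ} {j : Fin n}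
    (hj : j ∈ Z) (hj1 : j + 1 ∉ Z) (hσ : σ ∈ cyclicLambda n) (hτ : τ ∈ cyclicLambda n)
    (hστ : ∀ i ∉ Z, 0 < σ i * τ i) :
    update τ j (σ j) ∈ cyclicLambda n ∧ (∀ i ∉ Z.erase j, 0 < σ i * update τ j (σ j) i) ∧
      ∀ k ∈ Z.erase j, cyclicTerm (update τ j (σ j)) k = cyclicTerm τ k := by
  refine ⟨fun i => ?_, fun i hi => ?_, fun k hk => ?_⟩
  · rcases eq_or_ne i j with rfl | hij
    · simpa using hσ i
    · simpa [update_of_ne hij] using hτ i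
  · rcases eq_or_ne i j with rfl | hij
    · simpa using mul_self_pos.2 (hσ i)
    · rw [update_of_ne hij]
      exact hστ i fun hiZ => hi (mem_erase.2 ⟨hij, hiZ⟩)
  · exact cyclicTerm_update_of_ne τ _ (ne_of_mem_erase hk)
      (ne_of_mem_of_not_mem (mem_of_mem_erase hk) hj1)

lemma cyclicTerm_update_mul_neg {τ : Fin n → ℝ} (hτ : τ ∈ cyclicLambda n) {j : Fin n}
    (hj : j ≠ j + 1) {v : ℝ} (hv : v * τ j < 0) :
    cyclicTerm (update τ j v) j * cyclicTerm τ j < 0 := by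
  have hj' : j - 1 ≠ j := fun h => hj (sub_eq_iff_eq_add.1 h)
  have hprod : cyclicTerm (update τ j v) j * cyclicTerm τ j
      = (cyclicDelta n j * cyclicDelta n j) * (v * τ j) * (τ (j - 1) * τ (j - 1)) := by
    simp only [cyclicTerm, update_self, update_of_ne hj']
    ring
  rw [hprod, cyclicDelta_mul_self, one_mul]
  exact mul_neg_of_neg_of_pos hv (mul_self_pos.2 (hτ _))

lemma cyclicN_update_eq {τ : Fin n → ℝ} {j : Fin n} {v : ℝ} (hv : 0 < v * τ j)
    (hτ : τ ∈ cyclicLambda n) : cyclicN n (update τ j v) = cyclicN n τ := by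
  refine cyclicN_congr fun i => ?_
  rcases eq_or_ne i j with rfl | hij
  · simpa using hv
  · simpa [update_of_ne hij] using mul_self_pos.2 (hτ i)

theorem cyclicN_le_of_cyclicTerm_pos (Z : Finset (Fin n)) (hZ : Z ≠ univ) {σ τ : Fin n → ℝ}
    (hσ : σ ∈ cyclicLambda n) (hτ : τ ∈ cyclicLambda n) (hστ : ∀ i ∉ Z, 0 < σ i * τ i)
    (hpos : ∀ k ∈ Z, 0 < cyclicTerm τ k) : cyclicN n τ ≤ cyclicN n σ := by
  induction Z using Finset.strongInduction generalizing τ with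
  | H Z ih =>
  rcases Z.eq_empty_or_nonempty with rfl | hne
  · exact (cyclicN_congr fun i => by simpa [mul_comm] using hστ i (notMem_empty i)).le
  obtain ⟨j, hj, hj1⟩ := Fin.exists_mem_add_one_notMem hne hZ
  have hjj : j ≠ j + 1 := ne_of_mem_of_not_mem hj hj1
  obtain ⟨hτ', hστ', hterm⟩ := update_of_mem_of_add_one_notMem hj hj1 hσ hτ hστ
  have hle : cyclicN n (update τ j (σ j)) ≤ cyclicN n σ :=
    ih _ (erase_ssubset hj) (fun h => notMem_erase j Z (h ▸ mem_univ j)) hτ' hστ'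
      fun k hk => hterm k hk ▸ hpos k (mem_of_mem_erase hk)
  refine le_trans ?_ hle
  rcases lt_or_gt_of_ne (mul_ne_zero (hσ j) (hτ j)) with hneg | hpos'
  · -- `τ` has no sign change at `j`, so flipping `τ j` cannot lower `N τ`.
    have hflip := cyclicTerm_update_mul_neg hτ hjj hneg
    have h1 : signChange (update τ j (σ j)) j = 1 := if_pos (by nlinarith [hpos j hj])
    have h0 : signChange τ j = 0 := if_neg (by linarith [hpos j hj])
    have := cyclicN_update_add τ hjj (σ j)
    have := signChange_le_one τ (j + 1)
    omega
  · exact (cyclicN_update_eq hpos' hτ).ge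

theorem cyclicN_le_of_cyclicTerm_neg (Z : Finset (Fin n)) (hZ : Z ≠ univ) {σ τ : Fin n → ℝ}
    (hσ : σ ∈ cyclicLambda n) (hτ : τ ∈ cyclicLambda n) (hστ : ∀ i ∉ Z, 0 < σ i * τ i)
    (hneg : ∀ k ∈ Z, cyclicTerm τ k < 0) : cyclicN n σ ≤ cyclicN n τ := by
  induction Z using Finset.strongInduction generalizing τ with
  | H Z ih =>
  rcases Z.eq_empty_or_nonempty with rfl | hne
  · exact (cyclicN_congr fun i => hστ i (notMem_empty i)).le
  obtain ⟨j, hj, hj1⟩ := Fin.exists_mem_add_one_notMem hne hZ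
  have hjj : j ≠ j + 1 := ne_of_mem_of_not_mem hj hj1
  obtain ⟨hτ', hστ', hterm⟩ := update_of_mem_of_add_one_notMem hj hj1 hσ hτ hστ
  have hle : cyclicN n σ ≤ cyclicN n (update τ j (σ j)) :=
    ih _ (erase_ssubset hj) (fun h => notMem_erase j Z (h ▸ mem_univ j)) hτ' hστ'
      fun k hk => hterm k hk ▸ hneg k (mem_of_mem_erase hk)
  refine hle.trans ?_
  rcases lt_or_gt_of_ne (mul_ne_zero (hσ j) (hτ j)) with hflip | hsame
  · -- `τ` has a sign change at `j`, so flipping `τ j` cannot raise `N τ`.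
    have hflip := cyclicTerm_update_mul_neg hτ hjj hflip
    have h0 : signChange (update τ j (σ j)) j = 0 := if_neg (by nlinarith [hneg j hj])
    have h1 : signChange τ j = 1 := if_pos (hneg j hj)
    have := cyclicN_update_add τ hjj (σ j)
    have := signChange_le_one (update τ j (σ j)) (j + 1)
    omega
  · exact (cyclicN_update_eq hsame hτ).le

end SignChanges

section SignPatterns

variable {n : ℕ} [NeZero n]

def SignExtends (σ a : Fin n → ℝ) : Prop := σ ∈ cyclicLambda n ∧ ∀ i, a i ≠ 0 → 0 < σ i * a i

lemma SignExtends.trans {σ z a : Fin n → ℝ} (hσ : SignExtends σ z)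
    (hz : ∀ i, a i ≠ 0 → 0 < z i * a i) : SignExtends σ a :=
  ⟨hσ.1, fun i hi => mul_pos_of_mul_pos_of_mul_pos
    (hσ.2 i (left_ne_zero_of_mul (hz i hi).ne')) (hz i hi)⟩

lemma SignExtends.mul_pos {σ τ a : Fin n → ℝ} (hσ : SignExtends σ a) (hτ : SignExtends τ a)
    {i : Fin n} (hi : a i ≠ 0) : 0 < σ i * τ i :=
  mul_pos_of_mul_pos_of_mul_pos (hσ.2 i hi) (by simpa [mul_comm] using hτ.2 i hi)

lemma signExtends_self {y : Fin n → ℝ} (hy : y ∈ cyclicLambda n) : SignExtends y y :=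
  ⟨hy, fun _ hi => mul_self_pos.2 hi⟩

lemma frequently_cyclicN_eq_iff {a : Fin n → ℝ} {k : ℕ} :
    (∃ᶠ y in 𝓝[cyclicLambda n] a, cyclicN n y = k) ↔ ∃ σ, SignExtends σ a ∧ cyclicN n σ = k := by
  constructor
  · intro h
    obtain ⟨y, hyk, hya, hyΛ⟩ := (h.and_eventually
      ((eventually_nhdsWithin_of_eventually_nhds (eventually_mul_pos_nhds a)).and
        self_mem_nhdsWithin)).exists
    exact ⟨y, ⟨hyΛ, hya⟩, hyk⟩
  · rintro ⟨σ, ⟨hσ, hσa⟩, rfl⟩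
    set y : ℝ → Fin n → ℝ := fun ε i => if a i = 0 then ε * σ i else a i
    have hyσ : ∀ ε > 0, ∀ i, 0 < y ε i * σ i := fun ε hε i => by
      by_cases hi : a i = 0
      · simpa [y, hi, mul_assoc] using mul_pos hε (mul_self_pos.2 (hσ i))
      · simpa [y, hi, mul_comm] using hσa i hi
    have hcont : Continuous y := continuous_pi fun i => by
      by_cases hi : a i = 0 <;> simp only [y, hi, if_true, if_false] <;> fun_prop
    have hy0 : y 0 = a := funext fun i => by by_cases hi : a i = 0 <;> simp [y, hi]
    have hlim : Tendsto y (𝓝[>] 0) (𝓝[cyclicLambda n] a) :=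
      tendsto_nhdsWithin_iff.2 ⟨hy0 ▸ hcont.continuousAt.tendsto.mono_left nhdsWithin_le_nhds,
        eventually_nhdsWithin_of_forall fun ε hε i => left_ne_zero_of_mul (hyσ ε hε i).ne'⟩
    have hN : ∀ᶠ ε in 𝓝[>] (0 : ℝ), cyclicN n (y ε) = cyclicN n σ :=
      eventually_nhdsWithin_of_forall fun ε hε => cyclicN_congr (hyσ ε hε)
    exact hlim.frequently hN.frequently

lemma exists_signExtends (a : Fin n → ℝ) : ∃ σ, SignExtends σ a :=
  ⟨fun i => if a i = 0 then 1 else a i, fun i => by by_cases hi : a i = 0 <;> simp [hi],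
    fun i hi => by simp [hi, mul_self_pos.2 hi]⟩

lemma cyclicNm_le {a σ : Fin n → ℝ} (hσ : SignExtends σ a) : cyclicNm n a ≤ cyclicN n σ :=
  Nat.sInf_le (frequently_cyclicN_eq_iff.2 ⟨σ, hσ, rfl⟩)

lemma le_cyclicNm {a : Fin n → ℝ} {m : ℕ} (h : ∀ σ, SignExtends σ a → m ≤ cyclicN n σ) :
    m ≤ cyclicNm n a := by
  obtain ⟨σ, hσ⟩ := exists_signExtends a
  refine le_csInf ⟨_, frequently_cyclicN_eq_iff.2 ⟨σ, hσ, rfl⟩⟩ fun k hk => ?_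
  obtain ⟨τ, hτ, rfl⟩ := frequently_cyclicN_eq_iff.1 hk
  exact h τ hτ

lemma le_cyclicNM {a σ : Fin n → ℝ} (hσ : SignExtends σ a) : cyclicN n σ ≤ cyclicNM n a := by
  refine le_csSup ⟨n, fun k hk => ?_⟩ (frequently_cyclicN_eq_iff.2 ⟨σ, hσ, rfl⟩)
  obtain ⟨τ, -, rfl⟩ := frequently_cyclicN_eq_iff.1 hk
  exact cyclicN_le_card τ

lemma cyclicNM_le {a : Fin n → ℝ} {m : ℕ} (h : ∀ σ, SignExtends σ a → cyclicN n σ ≤ m) :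
    cyclicNM n a ≤ m := by
  obtain ⟨σ, hσ⟩ := exists_signExtends a
  refine csSup_le ⟨_, frequently_cyclicN_eq_iff.2 ⟨σ, hσ, rfl⟩⟩ fun k hk => ?_
  obtain ⟨τ, hτ, rfl⟩ := frequently_cyclicN_eq_iff.1 hk
  exact h τ hτ

lemma cyclicNm_eq_of_mem {y : Fin n → ℝ} (hy : y ∈ cyclicLambda n) : cyclicNm n y = cyclicN n y :=
  (cyclicNm_le (signExtends_self hy)).antisymm <| le_cyclicNm fun _ hσ =>
    (cyclicN_congr fun i => hσ.2 i (hy i)).ge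

lemma cyclicN_le_cyclicNm_of_cyclicTerm_pos {a τ : Fin n → ℝ} (ha : a ≠ 0) (hτ : SignExtends τ a)
    (hpos : ∀ k, a k = 0 → 0 < cyclicTerm τ k) : cyclicN n τ ≤ cyclicNm n a :=
  le_cyclicNm fun _ hσ => cyclicN_le_of_cyclicTerm_pos _ (filter_eq_zero_ne_univ ha) hσ.1 hτ.1
    (fun i hi => hσ.mul_pos hτ (by simpa using hi)) (fun k hk => hpos k (by simpa using hk))

lemma cyclicNM_le_of_cyclicTerm_neg {a τ : Fin n → ℝ} (ha : a ≠ 0) (hτ : SignExtends τ a)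
    (hneg : ∀ k, a k = 0 → cyclicTerm τ k < 0) : cyclicNM n a ≤ cyclicN n τ :=
  cyclicNM_le fun σ hσ => cyclicN_le_of_cyclicTerm_neg _ (filter_eq_zero_ne_univ ha) hσ.1 hτ.1
    (fun i hi => hσ.mul_pos hτ (by simpa using hi)) (fun k hk => hneg k (by simpa using hk))

lemma cyclicNm_le_of_mem_closure {x₀ : Fin n → ℝ} {m : ℕ}
    (hx : x₀ ∈ closure ({0} ∪ {y | cyclicNM n y ≤ m})) (hx0 : x₀ ≠ 0) : cyclicNm n x₀ ≤ m := by
  obtain ⟨z, hzK, hz0, hzx⟩ := (mem_closure_iff_frequently.1 hx |>.and_eventually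
    ((eventually_ne_nhds hx0).and (eventually_mul_pos_nhds x₀))).exists
  have hzm : cyclicNM n z ≤ m := hzK.resolve_left hz0
  obtain ⟨σ, hσ⟩ := exists_signExtends z
  exact (cyclicNm_le (hσ.trans hzx)).trans ((le_cyclicNM hσ).trans hzm)

lemma eventually_signExtends_of_step {l : Filter ℝ} {x : ℝ → Fin n → ℝ} {a : Fin n → ℝ}
    (ha : a ≠ 0) (e : ℝ) (hbase : ∀ᶠ s in l, ∀ i, a i ≠ 0 → 0 < x s i * a i)
    (hstep : ∀ k c, a k = 0 → (∀ᶠ s in l, 0 < x s (k - 1) * c) →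
      ∀ᶠ s in l, 0 < e * cyclicDelta n k * x s k * c) :
    ∀ᶠ s in l, SignExtends (x s) a ∧ ∀ k, a k = 0 → 0 < e * cyclicTerm (x s) k := by
  have hsign : ∀ i, ∃ c, ∀ᶠ s in l, 0 < x s i * c :=
    Fin.forall_of_ne_zero_of_sub_one ha (fun i hi => ⟨a i, hbase.mono fun s hs => hs i hi⟩)
      fun i hi ⟨c, hc⟩ => ⟨e * cyclicDelta n i * c, (hstep i c hi hc).mono fun s hs => by
        rwa [show x s i * (e * cyclicDelta n i * c) = e * cyclicDelta n i * x s i * c by ring]⟩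
  choose c hc using hsign
  have hterm : ∀ k, ∀ᶠ s in l, a k = 0 → 0 < e * cyclicTerm (x s) k := fun k => by
    by_cases hk : a k = 0
    · filter_upwards [hstep k _ hk (hc (k - 1)), hc (k - 1)] with s h1 h2 _
      have h := mul_pos h1 h2
      rw [show e * cyclicDelta n k * x s k * c (k - 1) * (x s (k - 1) * c (k - 1))
          = e * cyclicTerm (x s) k * (c (k - 1) * c (k - 1)) by unfold cyclicTerm; ring] at h
      exact (mul_pos_iff_of_pos_right (mul_self_pos.2 (right_ne_zero_of_mul h2.ne'))).1 h
    · exact Eventually.of_forall fun _ h => absurd h hk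
  filter_upwards [hbase, eventually_all.2 hc, eventually_all.2 hterm] with s hb hs ht
  exact ⟨⟨fun i => left_ne_zero_of_mul (hs i).ne', hb⟩, ht⟩

end SignPatterns

namespace LinCNF

variable {n : ℕ} [NeZero n]

def vectorField (S : LinCNF n) (t : ℝ) (z : Fin n → ℝ) : Fin n → ℝ :=
  fun i => S.diag t i * z i + S.sub t i * z (i - 1)

lemma sub_mul_cyclicDelta_pos (S : LinCNF n) (t : ℝ) (i : Fin n) :
    0 < S.sub t i * cyclicDelta n i := by
  unfold cyclicDelta
  split_ifs with hi
  · subst hi; linarith [S.sub_neg t]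
  · simpa using S.sub_pos t i hi

lemma exists_lipschitzWith_vectorField (S : LinCNF n) (a b : ℝ) :
    ∃ K, ∀ t ∈ Set.Icc a b, LipschitzWith K (S.vectorField t) := by
  obtain ⟨C, hC⟩ := (isCompact_Icc (a := a) (b := b)).exists_bound_of_continuousOn
    (f := fun t => ((fun i => S.diag t i), (fun i => S.sub t i)))
    (Continuous.prodMk (continuous_pi S.cont_diag) (continuous_pi S.cont_sub)).continuousOn
  refine ⟨(2 * C).toNNReal, fun t ht => LipschitzWith.of_dist_le_mul fun z w => ?_⟩
  have hd : ∀ i, |S.diag t i| ≤ C := fun i =>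
    (norm_le_pi_norm (fun i => S.diag t i) i).trans ((norm_fst_le _).trans (hC t ht))
  have hs : ∀ i, |S.sub t i| ≤ C := fun i =>
    (norm_le_pi_norm (fun i => S.sub t i) i).trans ((norm_snd_le _).trans (hC t ht))
  have hC0 : 0 ≤ C := (abs_nonneg _).trans (hd 0)
  refine (dist_pi_le_iff (by positivity)).2 fun i => ?_
  have hzw : ∀ j, |z j - w j| ≤ dist z w := fun j => by
    simpa [Real.dist_eq] using dist_le_pi_dist z w j
  calc dist (S.vectorField t z i) (S.vectorField t w i)
      = |S.diag t i * (z i - w i) + S.sub t i * (z (i - 1) - w (i - 1))| := by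
        rw [Real.dist_eq]; unfold vectorField; ring_nf
    _ ≤ |S.diag t i| * |z i - w i| + |S.sub t i| * |z (i - 1) - w (i - 1)| := by
        rw [← abs_mul, ← abs_mul]; exact abs_add_le _ _
    _ ≤ C * dist z w + C * dist z w := by
        gcongr
        exacts [hd i, hzw i, hs i, hzw (i - 1)]
    _ ≤ (2 * C).toNNReal * dist z w := by
        rw [← two_mul, ← mul_assoc]
        exact mul_le_mul_of_nonneg_right (Real.le_coe_toNNReal _) dist_nonneg

variable {S : LinCNF n} {x : ℝ → Fin n → ℝ}

lemma IsSolution.hasDerivAt (hx : S.IsSolution x) (t : ℝ) :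
    HasDerivAt x (S.vectorField t (x t)) t :=
  hasDerivAt_pi.2 (hx t)

lemma IsSolution.continuous_s5 (hx : S.IsSolution x) : Continuous x :=
  continuous_iff_continuousAt.2 fun t => (hx.hasDerivAt t).continuousAt

lemma IsSolution.ne_zero_of_le (hx : S.IsSolution x) {s t : ℝ} (hs : x s ≠ 0) (hst : s ≤ t) :
    x t ≠ 0 := by
  intro ht
  refine hs ?_
  obtain ⟨K, hK⟩ := S.exists_lipschitzWith_vectorField s t
  refine ODE_solution_unique_of_mem_Icc_left (s := fun _ => Set.univ) (g := fun _ => 0)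
    (fun r hr => (hK r (Set.Ioc_subset_Icc_self hr)).lipschitzOnWith) hx.continuous_s5.continuousOn
    (fun r _ => (hx.hasDerivAt r).hasDerivWithinAt) (fun _ _ => Set.mem_univ _) continuousOn_const
    (fun r _ => ?_) (fun _ _ => Set.mem_univ _) ht ⟨le_rfl, hst⟩
  convert (hasDerivAt_const r (0 : Fin n → ℝ)).hasDerivWithinAt
  ext i
  simp [vectorField]

lemma IsSolution.eventually_mul_pos (hx : S.IsSolution x) (t : ℝ) :
    ∀ᶠ s in 𝓝 t, ∀ i, x t i ≠ 0 → 0 < x s i * x t i :=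
  (hx.continuous_s5.tendsto t).eventually (eventually_mul_pos_nhds (x t))

lemma IsSolution.strictMonoOn_cyclicDelta_mul_exp (hx : S.IsSolution x) (k : Fin n) {c p q : ℝ}
    (hc : ∀ s ∈ Set.Ioo p q, 0 < x s (k - 1) * c) :
    StrictMonoOn (fun s => cyclicDelta n k * x s k * c * Real.exp (-∫ r in (0 : ℝ)..s, S.diag r k))
      (Set.Icc p q) :=
  strictMonoOn_mul_exp_neg_integral (β := fun s => S.sub s k * cyclicDelta n k * (x s (k - 1) * c))
    (S.cont_diag k)
    (fun s => (((hx s k).const_mul (cyclicDelta n k)).mul_const c).congr_deriv (by ring))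
    fun s hs => mul_pos (S.sub_mul_cyclicDelta_pos s k) (hc s hs)

lemma IsSolution.eventually_nhdsGT_of_eq_zero (hx : S.IsSolution x) {t : ℝ} {k : Fin n}
    (hk : x t k = 0) {c : ℝ} (hc : ∀ᶠ s in 𝓝[>] t, 0 < x s (k - 1) * c) :
    ∀ᶠ s in 𝓝[>] t, 0 < cyclicDelta n k * x s k * c := by
  obtain ⟨u, hu, hsub⟩ := mem_nhdsGT_iff_exists_Ioo_subset.1 hc
  filter_upwards [Ioo_mem_nhdsGT hu] with s hs
  have h := hx.strictMonoOn_cyclicDelta_mul_exp k (fun r hr => hsub hr) (Set.left_mem_Icc.2 hu.le)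
    ⟨hs.1.le, hs.2.le⟩ hs.1
  simp only [hk, mul_zero, zero_mul] at h
  exact (mul_pos_iff_of_pos_right (Real.exp_pos _)).1 h

lemma IsSolution.eventually_nhdsLT_of_eq_zero (hx : S.IsSolution x) {t : ℝ} {k : Fin n}
    (hk : x t k = 0) {c : ℝ} (hc : ∀ᶠ s in 𝓝[<] t, 0 < x s (k - 1) * c) :
    ∀ᶠ s in 𝓝[<] t, cyclicDelta n k * x s k * c < 0 := by
  obtain ⟨l, hl, hsub⟩ := mem_nhdsLT_iff_exists_Ioo_subset.1 hc
  filter_upwards [Ioo_mem_nhdsLT hl] with s hs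
  have h := hx.strictMonoOn_cyclicDelta_mul_exp k (fun r hr => hsub hr) ⟨hs.1.le, hs.2.le⟩
    (Set.right_mem_Icc.2 hl.le) hs.2
  simp only [hk, mul_zero, zero_mul] at h
  exact (neg_iff_pos_of_mul_neg h).2 (Real.exp_pos _)

theorem IsSolution.eventually_nhdsGT (hx : S.IsSolution x) {t : ℝ} (ht : x t ≠ 0) :
    ∀ᶠ s in 𝓝[>] t, SignExtends (x s) (x t) ∧ ∀ k, x t k = 0 → 0 < cyclicTerm (x s) k := by
  simpa using eventually_signExtends_of_step ht 1
    (eventually_nhdsWithin_of_eventually_nhds (hx.eventually_mul_pos t))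
    fun _ _ hk hc => by simpa using hx.eventually_nhdsGT_of_eq_zero hk hc

theorem IsSolution.eventually_nhdsLT (hx : S.IsSolution x) {t : ℝ} (ht : x t ≠ 0) :
    ∀ᶠ s in 𝓝[<] t, SignExtends (x s) (x t) ∧ ∀ k, x t k = 0 → cyclicTerm (x s) k < 0 := by
  simpa using eventually_signExtends_of_step ht (-1)
    (eventually_nhdsWithin_of_eventually_nhds (hx.eventually_mul_pos t))
    fun _ _ hk hc => by simpa using hx.eventually_nhdsLT_of_eq_zero hk hc

theorem IsSolution.cyclicNm_le_of_le (hx : S.IsSolution x) {a b : ℝ} (ha : x a ≠ 0)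
    (hab : a ≤ b) : cyclicNm n (x b) ≤ cyclicNm n (x a) :=
  le_of_eventually_nhdsGT_of_eventually_nhdsLT hab
    (fun _ hc => (hx.eventually_nhdsGT (hx.ne_zero_of_le ha hc.1)).mono fun _ ⟨hw, hpos⟩ =>
      (cyclicNm_eq_of_mem hw.1).trans_le
        (cyclicN_le_cyclicNm_of_cyclicTerm_pos (hx.ne_zero_of_le ha hc.1) hw hpos))
    (fun _ hc => (hx.eventually_nhdsLT (hx.ne_zero_of_le ha hc.1.le)).mono fun _ ⟨hw, _⟩ =>
      (cyclicNm_le hw).trans_eq (cyclicNm_eq_of_mem hw.1).symm)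

end LinCNF

theorem stmt5_general (n : ℕ) [NeZero n] (S : LinCNF n)
    (Φ : ℝ → (Fin n → ℝ) →ₗ[ℝ] (Fin n → ℝ)) (hΦ : S.IsFundamental Φ)
    (h : ℕ) :
    ∀ x₀ ∈ closure (Kcone n h), x₀ ≠ 0 → ∀ t : ℝ, 0 < t →
      Φ t x₀ ≠ 0 ∧ cyclicNM n (Φ t x₀) ≤ 2 * h - 1 := by
  intro x₀ hx₀ hx₀0 t ht
  have hx : S.IsSolution fun s => Φ s x₀ := hΦ.2 x₀
  have hx0 : Φ 0 x₀ = x₀ := by rw [hΦ.1]; rfl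
  have hxt : Φ t x₀ ≠ 0 := hx.ne_zero_of_le (hx0.symm ▸ hx₀0) ht.le
  obtain ⟨v, ⟨hv, hneg⟩, hv0⟩ := ((hx.eventually_nhdsLT hxt).and (Ioo_mem_nhdsLT ht)).exists
  refine ⟨hxt, ?_⟩
  calc cyclicNM n (Φ t x₀) ≤ cyclicN n (Φ v x₀) := cyclicNM_le_of_cyclicTerm_neg hxt hv hneg
    _ = cyclicNm n (Φ v x₀) := (cyclicNm_eq_of_mem hv.1).symm
    _ ≤ cyclicNm n (Φ 0 x₀) := hx.cyclicNm_le_of_le (hx0.symm ▸ hx₀0) hv0.1.le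
    _ ≤ 2 * h - 1 := by rw [hx0]; exact cyclicNm_le_of_mem_closure hx₀ hx₀0

/-- For `t > 0`, the fundamental solution operator maps
`K̄_h \ {0}` into `Int K̄_h = K_h \ {0}`. -/
theorem stmt5 (n : ℕ) [NeZero n] (hn : 2 ≤ n) (S : LinCNF n)
    (Φ : ℝ → (Fin n → ℝ) →ₗ[ℝ] (Fin n → ℝ)) (hΦ : S.IsFundamental Φ)
    (h : ℕ) (h1 : 1 ≤ h) (h2 : h ≤ (ntilde n + 1) / 2) :
    ∀ x₀ ∈ closure (Kcone n h), x₀ ≠ 0 → ∀ t : ℝ, 0 < t →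
      Φ t x₀ ≠ 0 ∧ cyclicNM n (Φ t x₀) ≤ 2 * h - 1 :=
  stmt5_general n S Φ hΦ h
end
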